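/- Let n ≥ 1 and let Φ ⊆ BC_n be a root subsystem. Then there exist a sign function ε : {1,…,n} → {1,−1}, a partition P of {1,…,n}, and a type assignment t from P to {A, D, B, C, BC}, such that D_ε(Φ) = ⋃_{B∈P} Φ_{t(B)}(B), where D_ε is the linear automorphism of ℝ^n with D_ε(e_i) = ε(i)·e_i. -/

import Mathlib

open Finset

noncomputable section

/-- Standard basis vector `e i` of `ℝ^n`. -/
def E {n : ℕ} (i : Fin n) : Fin n → ℝ := Pi.single i 1

/-- Standard inner product on `ℝ^n`. -/
def dot {n : ℕ} (v w : Fin n → ℝ) : ℝ := ∑ i, v i * w i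

/-- Reflection across the hyperplane orthogonal to `α`. -/
def reflRoot {n : ℕ} (α v : Fin n → ℝ) : Fin n → ℝ := v - (2 * dot v α / dot α α) • α

/-- The root system `A_{n-1}`. -/
def Aset (n : ℕ) : Set (Fin n → ℝ) := {α | ∃ i j : Fin n, i ≠ j ∧ α = E i - E j}

/-- The root system `D_n`. -/
def Dset (n : ℕ) : Set (Fin n → ℝ) :=
  {α | ∃ i j : Fin n, i ≠ j ∧ (α = E i - E j ∨ α = E i + E j ∨ α = -(E i + E j))}

/-- The root system `B_n`. -/
def Bset (n : ℕ) : Set (Fin n → ℝ) := Dset n ∪ {α | ∃ i : Fin n, α = E i ∨ α = -E i}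

/-- The root system `C_n`. -/
def Cset (n : ℕ) : Set (Fin n → ℝ) :=
  Dset n ∪ {α | ∃ i : Fin n, α = (2:ℝ) • E i ∨ α = -((2:ℝ) • E i)}

/-- The nonreduced root system `BC_n`. -/
def BCset (n : ℕ) : Set (Fin n → ℝ) := Bset n ∪ Cset n

/-- Types of classical irreducible root (sub)systems. -/
inductive RType | A | D | B | C | BC
deriving DecidableEq

/-- Type-`A` system on a block `B`. -/
def PhiA {n : ℕ} (B : Finset (Fin n)) : Set (Fin n → ℝ) :=
  {α | ∃ i ∈ B, ∃ j ∈ B, i ≠ j ∧ α = E i - E j}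

/-- Type-`D` system on a block `B`. -/
def PhiD {n : ℕ} (B : Finset (Fin n)) : Set (Fin n → ℝ) :=
  {α | ∃ i ∈ B, ∃ j ∈ B, i ≠ j ∧ (α = E i - E j ∨ α = E i + E j ∨ α = -(E i + E j))}

/-- Type-`B` system on a block `B`. -/
def PhiB {n : ℕ} (B : Finset (Fin n)) : Set (Fin n → ℝ) :=
  PhiD B ∪ {α | ∃ i ∈ B, α = E i ∨ α = -E i}

/-- Type-`C` system on a block `B`. -/
def PhiC {n : ℕ} (B : Finset (Fin n)) : Set (Fin n → ℝ) :=
  PhiD B ∪ {α | ∃ i ∈ B, α = (2:ℝ) • E i ∨ α = -((2:ℝ) • E i)}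

/-- Type-`BC` system on a block `B`. -/
def PhiBC {n : ℕ} (B : Finset (Fin n)) : Set (Fin n → ℝ) := PhiB B ∪ PhiC B

/-- The classical system of the given type on a block. -/
def PhiOf {n : ℕ} : RType → Finset (Fin n) → Set (Fin n → ℝ)
  | RType.A => PhiA
  | RType.D => PhiD
  | RType.B => PhiB
  | RType.C => PhiC
  | RType.BC => PhiBC

/-! Call distinct indices `i, j` linked if `Φ` contains a root `± e_i ± e_j`. Reflecting
`s e_i + t e_j` in `u e_j + v e_k` gives `s e_i - tuv e_k`, so being linked is transitive and
the linkage classes are the blocks. Fix the least index `b` of each block and signs for which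
`e_b - e_i` is a root of the sign-changed system `Ψ`. The reflection in `e_a - e_i` transposes
the coordinates `a` and `i`, so `Ψ` then contains all of `Φ_A(B)`, and a single root `e_i`,
`2e_i` or `e_i + e_j` of a block spreads to all roots of that kind in the block. Since the
reflection in `e_j` or `2e_j` turns `e_i - e_j` into `e_i + e_j`, the roots of `Ψ` in a block
form a system of one of the five types. -/

namespace BCRootSystem

variable {n : ℕ} {Φ Ψ : Set (Fin n → ℝ)}

def IsSign (s : ℝ) : Prop := s = 1 ∨ s = -1

lemma IsSign.mul {s t : ℝ} (hs : IsSign s) (ht : IsSign t) : IsSign (s * t) := by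
  rcases hs with rfl | rfl <;> rcases ht with rfl | rfl <;> norm_num [IsSign]

lemma IsSign.neg {s : ℝ} (hs : IsSign s) : IsSign (-s) := by
  rcases hs with rfl | rfl <;> norm_num [IsSign]

lemma IsSign.mul_self {s : ℝ} (hs : IsSign s) : s * s = 1 := by
  rcases hs with rfl | rfl <;> norm_num

lemma dot_eq_dotProduct (v w : Fin n → ℝ) : dot v w = v ⬝ᵥ w := rfl

lemma reflRoot_eq_sub_smul {α β : Fin n → ℝ} {c : ℝ} (hα : dot α α ≠ 0)
    (h : 2 * dot β α = c * dot α α) : reflRoot α β = β - c • α := by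
  rw [reflRoot, h, mul_div_cancel_right₀ _ hα]

lemma reflRoot_self {α : Fin n → ℝ} (hα : α ≠ 0) : reflRoot α α = -α := by
  rw [reflRoot_eq_sub_smul (c := 2) (by simpa [dot_eq_dotProduct] using hα) rfl]
  module

lemma reflRoot_E_sub_E {a i : Fin n} (hai : a ≠ i) (v : Fin n → ℝ) :
    reflRoot (E a - E i) v = v ∘ Equiv.swap a i := by
  rw [reflRoot_eq_sub_smul (c := v a - v i)]
  · ext m
    simp only [E, Pi.sub_apply, Pi.smul_apply, Pi.single_apply, Function.comp_apply,
      Equiv.swap_apply_def, smul_eq_mul]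
    split_ifs <;> simp_all
  · simp [dot_eq_dotProduct, E, hai, hai.symm]
  · simp [dot_eq_dotProduct, E, hai, hai.symm, mul_comm, one_add_one_eq_two]

lemma reflRoot_smul_E_add_smul_E {i j k : Fin n} (hij : i ≠ j) (hjk : j ≠ k) (hik : i ≠ k)
    {u v : ℝ} (hu : IsSign u) (hv : IsSign v) (s t : ℝ) :
    reflRoot (u • E j + v • E k) (s • E i + t • E j) = s • E i + (-(t * u * v)) • E k := by
  rw [reflRoot_eq_sub_smul (c := t * u)]
  · rcases hu with rfl | rfl <;> module
  · simp [dot_eq_dotProduct, E, hjk, hjk.symm, hu.mul_self, hv.mul_self]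
  · simp [dot_eq_dotProduct, E, hjk, hik, hij.symm, hu.mul_self, hv.mul_self, mul_comm,
      one_add_one_eq_two]

lemma reflRoot_smul_E_E_sub_E {i j : Fin n} (hij : i ≠ j) {c : ℝ} (hc : c ≠ 0) :
    reflRoot (c • E j) (E i - E j) = E i + E j := by
  rw [reflRoot_eq_sub_smul (c := -2 / c), smul_smul, div_mul_cancel₀ _ hc]
  · module
  · simp [dot_eq_dotProduct, E, hc]
  · have hβα : dot (E i - E j) (c • E j) = -c := by simp [dot_eq_dotProduct, E, hij.symm]
    have hαα : dot (c • E j) (c • E j) = c * c := by simp [dot_eq_dotProduct, E]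
    rw [hβα, hαα]
    field_simp

lemma E_comp_swap (a i j : Fin n) : E j ∘ Equiv.swap a i = E (Equiv.swap a i j) := by
  simp [E, Pi.single_comp_equiv]

lemma mul_E (ε : Fin n → ℝ) (i : Fin n) : ε * E i = ε i • E i := by
  ext m
  by_cases h : m = i <;> simp [E, h]

lemma mul_mul_eq_self {ε : Fin n → ℝ} (hε : ∀ i, IsSign (ε i)) (v : Fin n → ℝ) :
    ε * (ε * v) = v := by
  ext j
  simp [← mul_assoc, (hε j).mul_self]

lemma mem_image_mul_iff {ε : Fin n → ℝ} (hε : ∀ i, IsSign (ε i)) {v : Fin n → ℝ} :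
    v ∈ (ε * ·) '' Φ ↔ ε * v ∈ Φ := by
  rw [Set.image_eq_preimage_of_inverse (mul_mul_eq_self hε) (mul_mul_eq_self hε)]
  rfl

lemma dot_mul_mul {ε : Fin n → ℝ} (hε : ∀ i, IsSign (ε i)) (v w : Fin n → ℝ) :
    dot (ε * v) (ε * w) = dot v w := by
  refine Finset.sum_congr rfl fun j _ => ?_
  simp only [Pi.mul_apply]
  linear_combination v j * w j * (hε j).mul_self

lemma reflRoot_mul {ε : Fin n → ℝ} (hε : ∀ i, IsSign (ε i)) (α β : Fin n → ℝ) :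
    reflRoot (ε * α) (ε * β) = ε * reflRoot α β := by
  simp only [reflRoot, dot_mul_mul hε, mul_sub, mul_smul_comm]

def axisRoots (c : ℝ) (S : Finset (Fin n)) : Set (Fin n → ℝ) :=
  {α | ∃ i ∈ S, α = c • E i ∨ α = -(c • E i)}

lemma PhiB_eq (S : Finset (Fin n)) : PhiB S = PhiD S ∪ axisRoots 1 S := by
  simp [PhiB, axisRoots]

lemma PhiC_eq (S : Finset (Fin n)) : PhiC S = PhiD S ∪ axisRoots 2 S := rfl

lemma BCset_eq : BCset n = Dset n ∪ (axisRoots 1 univ ∪ axisRoots 2 univ) := by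
  have h1 : axisRoots 1 univ = {α : Fin n → ℝ | ∃ i, α = E i ∨ α = -E i} := by
    ext; simp [axisRoots]
  have h2 : axisRoots 2 univ = {α : Fin n → ℝ | ∃ i, α = (2:ℝ) • E i ∨ α = -((2:ℝ) • E i)} := by
    ext; simp [axisRoots]
  rw [h1, h2, BCset, Bset, Cset, Set.union_union_union_comm, Set.union_self]

lemma mem_Dset_iff {α : Fin n → ℝ} :
    α ∈ Dset n ↔ ∃ i j s t, i ≠ j ∧ IsSign s ∧ IsSign t ∧ α = s • E i + t • E j := by
  constructor
  · rintro ⟨i, j, hij, rfl | rfl | rfl⟩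
    · exact ⟨i, j, 1, -1, hij, .inl rfl, .inr rfl, by module⟩
    · exact ⟨i, j, 1, 1, hij, .inl rfl, .inl rfl, by module⟩
    · exact ⟨i, j, -1, -1, hij, .inr rfl, .inr rfl, by module⟩
  · rintro ⟨i, j, s, t, hij, rfl | rfl, rfl | rfl, rfl⟩
    · exact ⟨i, j, hij, .inr (.inl (by module))⟩
    · exact ⟨i, j, hij, .inl (by module)⟩
    · exact ⟨j, i, hij.symm, .inl (by module)⟩
    · exact ⟨i, j, hij, .inr (.inr (by module))⟩

lemma ne_zero_of_mem_BCset {α : Fin n → ℝ} (hα : α ∈ BCset n) : α ≠ 0 := by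
  rw [BCset_eq] at hα
  rcases hα with ⟨i, j, hij, h⟩ | ⟨i, -, h⟩ | ⟨i, -, h⟩ <;> intro h0 <;>
    have := congrFun h0 i <;> rcases h with rfl | rfl | rfl <;> simp_all [E]

lemma mul_mem_Dset {ε : Fin n → ℝ} (hε : ∀ i, IsSign (ε i)) {α : Fin n → ℝ}
    (hα : α ∈ Dset n) : ε * α ∈ Dset n := by
  obtain ⟨i, j, s, t, hij, hs, ht, rfl⟩ := mem_Dset_iff.1 hα
  refine mem_Dset_iff.2 ⟨i, j, ε i * s, ε j * t, hij, (hε i).mul hs, (hε j).mul ht, ?_⟩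
  rw [mul_add, mul_smul_comm, mul_smul_comm, mul_E, mul_E, smul_smul, smul_smul, mul_comm s,
    mul_comm t]

lemma mul_mem_axisRoots {ε : Fin n → ℝ} (hε : ∀ i, IsSign (ε i)) {c : ℝ} {S : Finset (Fin n)}
    {α : Fin n → ℝ} (hα : α ∈ axisRoots c S) : ε * α ∈ axisRoots c S := by
  obtain ⟨i, hi, h⟩ := hα
  refine ⟨i, hi, ?_⟩
  have hεc : ε * (c • E i) = ε i • c • E i := by rw [mul_smul_comm, mul_E, smul_comm]
  rcases h with rfl | rfl <;> rcases hε i with h | h <;> simp [hεc, h, mul_neg]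

lemma mul_mem_BCset {ε : Fin n → ℝ} (hε : ∀ i, IsSign (ε i)) {α : Fin n → ℝ}
    (hα : α ∈ BCset n) : ε * α ∈ BCset n := by
  rw [BCset_eq] at hα ⊢
  exact hα.imp (mul_mem_Dset hε) (Or.imp (mul_mem_axisRoots hε) (mul_mem_axisRoots hε))

def Linked (Φ : Set (Fin n → ℝ)) (i j : Fin n) : Prop :=
  ∃ s t, IsSign s ∧ IsSign t ∧ s • E i + t • E j ∈ Φ

lemma Linked.symm {i j : Fin n} : Linked Φ i j → Linked Φ j i
  | ⟨s, t, hs, ht, h⟩ => ⟨t, s, ht, hs, by rwa [add_comm]⟩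

lemma Linked.of_image_mul {ε : Fin n → ℝ} (hε : ∀ i, IsSign (ε i)) {i j : Fin n}
    (h : Linked ((ε * ·) '' Φ) i j) : Linked Φ i j := by
  obtain ⟨s, t, hs, ht, h⟩ := h
  rw [mem_image_mul_iff hε, mul_add, mul_smul_comm, mul_smul_comm, mul_E, mul_E, smul_smul,
    smul_smul] at h
  exact ⟨_, _, hs.mul (hε i), ht.mul (hε j), h⟩

def HasAxisRoot (Ψ : Set (Fin n → ℝ)) (S : Finset (Fin n)) (c : ℝ) : Prop := ∃ i ∈ S, c • E i ∈ Ψ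

def HasPlusRoot (Ψ : Set (Fin n → ℝ)) (S : Finset (Fin n)) : Prop :=
  ∃ i ∈ S, ∃ j ∈ S, i ≠ j ∧ E i + E j ∈ Ψ

open Classical in
def rootType (Ψ : Set (Fin n → ℝ)) (S : Finset (Fin n)) : RType :=
  if HasAxisRoot Ψ S 1 then (if HasAxisRoot Ψ S 2 then .BC else .B)
  else if HasAxisRoot Ψ S 2 then .C
  else if HasPlusRoot Ψ S then .D else .A

lemma PhiA_subset_PhiD (S : Finset (Fin n)) : PhiA S ⊆ PhiD S :=
  fun _ ⟨i, hi, j, hj, hij, h⟩ => ⟨i, hi, j, hj, hij, .inl h⟩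

lemma PhiD_subset_PhiOf {t : RType} (ht : t ≠ .A) (S : Finset (Fin n)) :
    PhiD S ⊆ PhiOf t S := by
  cases t
  · exact absurd rfl ht
  · exact subset_rfl
  · exact Set.subset_union_left
  · exact Set.subset_union_left
  · exact Set.subset_union_left.trans Set.subset_union_left

lemma PhiA_subset_PhiOf (t : RType) (S : Finset (Fin n)) : PhiA S ⊆ PhiOf t S := by
  cases t
  · exact subset_rfl
  all_goals exact (PhiA_subset_PhiD S).trans (PhiD_subset_PhiOf (by decide) S)

lemma rootType_ne_A {S : Finset (Fin n)} (h : HasPlusRoot Ψ S) : rootType Ψ S ≠ .A := by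
  unfold rootType
  split_ifs <;> decide

lemma axisRoots_subset_PhiOf_rootType {S : Finset (Fin n)} {c : ℝ} (hc : c = 1 ∨ c = 2)
    (h : HasAxisRoot Ψ S c) : axisRoots c S ⊆ PhiOf (rootType Ψ S) S := by
  unfold rootType
  rcases hc with rfl | rfl <;> split_ifs <;> simp only [PhiOf, PhiBC, PhiB_eq, PhiC_eq]
  · exact Set.subset_union_right.trans Set.subset_union_left
  · exact Set.subset_union_right
  · exact Set.subset_union_right.trans Set.subset_union_right
  · exact Set.subset_union_right

structure IsRootSubsystem (Φ : Set (Fin n → ℝ)) : Prop where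
  subset_BCset : Φ ⊆ BCset n
  reflRoot_mem : ∀ α ∈ Φ, ∀ β ∈ Φ, reflRoot α β ∈ Φ

namespace IsRootSubsystem

lemma neg_mem (hΦ : IsRootSubsystem Φ) {α : Fin n → ℝ} (hα : α ∈ Φ) : -α ∈ Φ := by
  simpa [reflRoot_self (ne_zero_of_mem_BCset (hΦ.subset_BCset hα))] using
    hΦ.reflRoot_mem α hα α hα

lemma comp_swap_mem (hΦ : IsRootSubsystem Φ) {a i : Fin n} (hai : a ≠ i) (ha : E a - E i ∈ Φ)
    {v : Fin n → ℝ} (hv : v ∈ Φ) : v ∘ Equiv.swap a i ∈ Φ :=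
  reflRoot_E_sub_E hai v ▸ hΦ.reflRoot_mem _ ha _ hv

lemma image_mul (hΦ : IsRootSubsystem Φ) {ε : Fin n → ℝ} (hε : ∀ i, IsSign (ε i)) :
    IsRootSubsystem ((ε * ·) '' Φ) where
  subset_BCset := by
    rintro _ ⟨α, hα, rfl⟩
    exact mul_mem_BCset hε (hΦ.subset_BCset hα)
  reflRoot_mem := by
    rintro _ ⟨α, hα, rfl⟩ _ ⟨β, hβ, rfl⟩
    exact ⟨_, hΦ.reflRoot_mem α hα β hβ, (reflRoot_mul hε α β).symm⟩

lemma PhiA_subset_of_sub_mem (hΨ : IsRootSubsystem Ψ) {S : Finset (Fin n)} {b : Fin n}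
    (hb : b ∈ S) (h : ∀ m ∈ S, m ≠ b → E b - E m ∈ Ψ) : PhiA S ⊆ Ψ := by
  rintro _ ⟨k, hk, l, hl, hkl, rfl⟩
  rcases eq_or_ne k b with rfl | hkb
  · exact h l hl hkl.symm
  rcases eq_or_ne l b with rfl | hlb
  · simpa using hΨ.neg_mem (h k hk hkb)
  simpa [Pi.sub_comp, E_comp_swap, Equiv.swap_apply_of_ne_of_ne hkl.symm hlb] using
    hΨ.comp_swap_mem hkb (by simpa using hΨ.neg_mem (h k hk hkb)) (h l hl hlb)

lemma linked_trans (hΦ : IsRootSubsystem Φ) {i j k : Fin n} (hij : i ≠ j) (hjk : j ≠ k)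
    (hik : i ≠ k) : Linked Φ i j → Linked Φ j k → Linked Φ i k
  | ⟨s, t, hs, ht, h₁⟩, ⟨u, v, hu, hv, h₂⟩ =>
    ⟨s, -(t * u * v), hs, ((ht.mul hu).mul hv).neg,
      reflRoot_smul_E_add_smul_E hij hjk hik hu hv s t ▸ hΦ.reflRoot_mem _ h₂ _ h₁⟩

section Block

variable (hΨ : IsRootSubsystem Ψ) {S : Finset (Fin n)} (hA : PhiA S ⊆ Ψ)
include hΨ hA

lemma smul_E_mem_of_PhiA_subset {c : ℝ} {k m : Fin n} (hk : k ∈ S) (hm : m ∈ S)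
    (h : c • E m ∈ Ψ) : c • E k ∈ Ψ := by
  rcases eq_or_ne k m with rfl | hkm
  · exact h
  simpa [Pi.smul_comp, E_comp_swap] using hΨ.comp_swap_mem hkm (hA ⟨k, hk, m, hm, hkm, rfl⟩) h

lemma add_E_mem_of_PhiA_subset {a i j : Fin n} (ha : a ∈ S) (hi : i ∈ S) (haj : a ≠ j)
    (hij : i ≠ j) (h : E i + E j ∈ Ψ) : E a + E j ∈ Ψ := by
  rcases eq_or_ne a i with rfl | hai
  · exact h
  simpa [Pi.add_comp, E_comp_swap, Equiv.swap_apply_of_ne_of_ne haj.symm hij.symm] using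
    hΨ.comp_swap_mem hai (hA ⟨a, ha, i, hi, hai, rfl⟩) h

lemma PhiD_subset_of_add_mem {i j : Fin n} (hi : i ∈ S) (hj : j ∈ S) (hij : i ≠ j)
    (h : E i + E j ∈ Ψ) : PhiD S ⊆ Ψ := by
  have hplus : ∀ k ∈ S, ∀ l ∈ S, k ≠ l → E k + E l ∈ Ψ := by
    intro k hk l hl hkl
    rcases eq_or_ne k j with rfl | hkj
    · rw [add_comm]
      exact hΨ.add_E_mem_of_PhiA_subset hA hl hi hkl.symm hij h
    · have hkj' : E j + E k ∈ Ψ := by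
        rw [add_comm]; exact hΨ.add_E_mem_of_PhiA_subset hA hk hi hkj hij h
      rw [add_comm]
      exact hΨ.add_E_mem_of_PhiA_subset hA hl hj hkl.symm hkj.symm hkj'
  rintro _ ⟨k, hk, l, hl, hkl, rfl | rfl | rfl⟩
  · exact hA ⟨k, hk, l, hl, hkl, rfl⟩
  · exact hplus k hk l hl hkl
  · exact hΨ.neg_mem (hplus k hk l hl hkl)

lemma PhiD_subset_of_hasAxisRoot {c : ℝ} (hc : c ≠ 0) (h : HasAxisRoot Ψ S c) :
    PhiD S ⊆ Ψ := by
  obtain ⟨m, hm, hcm⟩ := h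
  intro α hα
  obtain ⟨k, hk, l, hl, hkl, -⟩ := id hα
  refine hΨ.PhiD_subset_of_add_mem hA hk hl hkl ?_ hα
  rw [← reflRoot_smul_E_E_sub_E hkl hc]
  exact hΨ.reflRoot_mem _ (hΨ.smul_E_mem_of_PhiA_subset hA hl hm hcm) _
    (hA ⟨k, hk, l, hl, hkl, rfl⟩)

lemma axisRoots_subset {c : ℝ} (h : HasAxisRoot Ψ S c) : axisRoots c S ⊆ Ψ := by
  obtain ⟨m, hm, hcm⟩ := h
  rintro _ ⟨k, hk, rfl | rfl⟩
  · exact hΨ.smul_E_mem_of_PhiA_subset hA hk hm hcm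
  · exact hΨ.neg_mem (hΨ.smul_E_mem_of_PhiA_subset hA hk hm hcm)

lemma PhiOf_rootType_subset : PhiOf (rootType Ψ S) S ⊆ Ψ := by
  have hD1 := hΨ.PhiD_subset_of_hasAxisRoot hA one_ne_zero
  have hD2 := hΨ.PhiD_subset_of_hasAxisRoot hA two_ne_zero
  unfold rootType
  split_ifs with h1 h2 h2 h3
  · simp only [PhiOf, PhiBC, PhiB_eq, PhiC_eq, Set.union_subset_iff]
    exact ⟨⟨hD1 h1, hΨ.axisRoots_subset hA h1⟩, hD2 h2, hΨ.axisRoots_subset hA h2⟩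
  · simp only [PhiOf, PhiB_eq, Set.union_subset_iff]
    exact ⟨hD1 h1, hΨ.axisRoots_subset hA h1⟩
  · simp only [PhiOf, PhiC_eq, Set.union_subset_iff]
    exact ⟨hD2 h2, hΨ.axisRoots_subset hA h2⟩
  · obtain ⟨i, hi, j, hj, hij, h⟩ := h3
    exact hΨ.PhiD_subset_of_add_mem hA hi hj hij h
  · exact hA

end Block

lemma subset_iUnion_PhiOf_rootType (hΨ : IsRootSubsystem Ψ) {blk : Fin n → Finset (Fin n)}
    (hself : ∀ i, i ∈ blk i) (hlinked : ∀ i j, Linked Ψ i j → j ∈ blk i) :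
    Ψ ⊆ ⋃ i, PhiOf (rootType Ψ (blk i)) (blk i) := by
  intro α hα
  rw [Set.mem_iUnion]
  have haxis : ∀ c, (c = 1 ∨ c = 2) → α ∈ axisRoots c univ →
      ∃ i, α ∈ PhiOf (rootType Ψ (blk i)) (blk i) := by
    rintro c hc ⟨i, -, h⟩
    have hci : c • E i ∈ Ψ := by
      rcases h with rfl | rfl
      · exact hα
      · simpa using hΨ.neg_mem hα
    exact ⟨i, axisRoots_subset_PhiOf_rootType hc ⟨i, hself i, hci⟩ ⟨i, hself i, h⟩⟩
  rcases BCset_eq ▸ hΨ.subset_BCset hα with ⟨i, j, hij, h⟩ | h1 | h2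
  · refine ⟨i, ?_⟩
    rcases h with rfl | h
    · have hj : j ∈ blk i := hlinked i j ⟨1, -1, .inl rfl, .inr rfl, by simpa [sub_eq_add_neg]⟩
      exact PhiA_subset_PhiOf _ _ ⟨i, hself i, j, hj, hij, rfl⟩
    · have hadd : E i + E j ∈ Ψ := by
        rcases h with rfl | rfl
        · exact hα
        · simpa using hΨ.neg_mem hα
      have hj : j ∈ blk i := hlinked i j ⟨1, 1, .inl rfl, .inl rfl, by simpa⟩
      exact PhiD_subset_PhiOf (rootType_ne_A ⟨i, hself i, j, hj, hij, hadd⟩) _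
        ⟨i, hself i, j, hj, hij, .inr h⟩
  · exact haxis 1 (.inl rfl) h1
  · exact haxis 2 (.inr rfl) h2

lemma eq_iUnion_PhiOf_rootType (hΨ : IsRootSubsystem Ψ) {blk : Fin n → Finset (Fin n)}
    (hself : ∀ i, i ∈ blk i) (hA : ∀ i, PhiA (blk i) ⊆ Ψ)
    (hlinked : ∀ i j, Linked Ψ i j → j ∈ blk i) :
    Ψ = ⋃ i, PhiOf (rootType Ψ (blk i)) (blk i) :=
  (hΨ.subset_iUnion_PhiOf_rootType hself hlinked).antisymm
    (Set.iUnion_subset fun i => hΨ.PhiOf_rootType_subset (hA i))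

end IsRootSubsystem

open Classical in
def linkedBlock (Φ : Set (Fin n → ℝ)) (i : Fin n) : Finset (Fin n) :=
  univ.filter fun j => i = j ∨ Linked Φ i j

lemma mem_linkedBlock {i j : Fin n} : j ∈ linkedBlock Φ i ↔ i = j ∨ Linked Φ i j := by
  simp [linkedBlock]

lemma self_mem_linkedBlock (Φ : Set (Fin n → ℝ)) (i : Fin n) : i ∈ linkedBlock Φ i :=
  mem_linkedBlock.2 (.inl rfl)

lemma mem_linkedBlock_comm {i j : Fin n} (h : j ∈ linkedBlock Φ i) : i ∈ linkedBlock Φ j := by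
  rw [mem_linkedBlock] at h ⊢
  exact h.imp Eq.symm Linked.symm

lemma IsRootSubsystem.mem_linkedBlock_trans (hΦ : IsRootSubsystem Φ) {i j k : Fin n}
    (hij : j ∈ linkedBlock Φ i) (hjk : k ∈ linkedBlock Φ j) : k ∈ linkedBlock Φ i := by
  rw [mem_linkedBlock] at hij hjk ⊢
  rcases hij with rfl | hij
  · exact hjk
  rcases hjk with rfl | hjk
  · exact .inr hij
  rcases eq_or_ne i k with hik | hik
  · exact .inl hik
  rcases eq_or_ne i j with rfl | hij'
  · exact .inr hjk
  rcases eq_or_ne j k with rfl | hjk'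
  · exact .inr hij
  exact .inr (hΦ.linked_trans hij' hjk' hik hij hjk)

lemma IsRootSubsystem.linkedBlock_eq_of_mem (hΦ : IsRootSubsystem Φ) {i j : Fin n}
    (h : j ∈ linkedBlock Φ i) : linkedBlock Φ j = linkedBlock Φ i := by
  ext k
  exact ⟨hΦ.mem_linkedBlock_trans h, hΦ.mem_linkedBlock_trans (mem_linkedBlock_comm h)⟩

def blockBase (Φ : Set (Fin n → ℝ)) (i : Fin n) : Fin n :=
  (linkedBlock Φ i).min' ⟨i, self_mem_linkedBlock Φ i⟩

lemma blockBase_mem (Φ : Set (Fin n → ℝ)) (i : Fin n) : blockBase Φ i ∈ linkedBlock Φ i :=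
  min'_mem _ _

lemma IsRootSubsystem.blockBase_eq_of_mem (hΦ : IsRootSubsystem Φ) {i j : Fin n}
    (h : j ∈ linkedBlock Φ i) : blockBase Φ j = blockBase Φ i := by
  unfold blockBase
  congr 1
  exact hΦ.linkedBlock_eq_of_mem h

lemma linked_blockBase {i : Fin n} (hi : i ≠ blockBase Φ i) : Linked Φ (blockBase Φ i) i :=
  ((mem_linkedBlock.1 (blockBase_mem Φ i)).resolve_left hi).symm

open Classical in
def normSign (Φ : Set (Fin n → ℝ)) (i : Fin n) : ℝ :=
  if i = blockBase Φ i ∨ E (blockBase Φ i) - E i ∈ Φ then 1 else -1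

lemma normSign_isSign (Φ : Set (Fin n → ℝ)) (i : Fin n) : IsSign (normSign Φ i) := by
  unfold normSign
  split_ifs
  exacts [.inl rfl, .inr rfl]

namespace IsRootSubsystem

variable (hΦ : IsRootSubsystem Φ)
include hΦ

lemma normSign_blockBase (i : Fin n) : normSign Φ (blockBase Φ i) = 1 :=
  if_pos (.inl (hΦ.blockBase_eq_of_mem (blockBase_mem Φ i)).symm)

lemma sub_smul_normSign_mem {i : Fin n} (hi : i ≠ blockBase Φ i) :
    E (blockBase Φ i) - normSign Φ i • E i ∈ Φ := by
  unfold normSign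
  split_ifs with h
  · simpa using h.resolve_left hi
  have hsub : E (blockBase Φ i) - E i ∉ Φ := fun h' => h (.inr h')
  obtain ⟨s, t, hs, ht, hst⟩ := linked_blockBase hi
  rw [neg_one_smul, sub_neg_eq_add]
  rcases hs with rfl | rfl <;> rcases ht with rfl | rfl
  · simpa using hst
  · exact absurd (by simpa [sub_eq_add_neg] using hst) hsub
  · exact absurd (by simpa [sub_eq_add_neg, add_comm] using hΦ.neg_mem hst) hsub
  · simpa [add_comm] using hΦ.neg_mem hst

lemma PhiA_linkedBlock_subset (i : Fin n) :
    PhiA (linkedBlock Φ i) ⊆ (normSign Φ * ·) '' Φ := by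
  refine (hΦ.image_mul (normSign_isSign Φ)).PhiA_subset_of_sub_mem (blockBase_mem Φ i) ?_
  intro m hm hmb
  rw [← hΦ.blockBase_eq_of_mem hm] at hmb ⊢
  rw [mem_image_mul_iff (normSign_isSign Φ), mul_sub, mul_E, mul_E, hΦ.normSign_blockBase,
    one_smul]
  exact hΦ.sub_smul_normSign_mem hmb

end IsRootSubsystem

end BCRootSystem

open BCRootSystem

theorem stmt9_general (n : ℕ) (Φ : Set (Fin n → ℝ)) (hsub : Φ ⊆ BCset n)
    (hcl : ∀ α ∈ Φ, ∀ β ∈ Φ, reflRoot α β ∈ Φ) :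
    ∃ (ε : Fin n → ℝ) (blk : Fin n → Finset (Fin n)) (t : Finset (Fin n) → RType),
      (∀ i, ε i = 1 ∨ ε i = -1) ∧
      (∀ i, i ∈ blk i) ∧ (∀ i j, j ∈ blk i → blk j = blk i) ∧
      (fun v : Fin n → ℝ => fun j => ε j * v j) '' Φ =
        ⋃ i, PhiOf (t (blk i)) (blk i) := by
  have hΦ : IsRootSubsystem Φ := ⟨hsub, hcl⟩
  have hε := normSign_isSign Φ
  refine ⟨normSign Φ, linkedBlock Φ, rootType ((normSign Φ * ·) '' Φ), hε,
    self_mem_linkedBlock Φ, fun i j => hΦ.linkedBlock_eq_of_mem, ?_⟩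
  exact (hΦ.image_mul hε).eq_iUnion_PhiOf_rootType (self_mem_linkedBlock Φ)
    hΦ.PhiA_linkedBlock_subset fun i j h => mem_linkedBlock.2 (.inr (h.of_image_mul hε))

/-- Classification: up to sign changes, every root subsystem of `BC_n` is a disjoint
union of classical systems on the blocks of a partition of the indices. -/
theorem stmt9 (n : ℕ) (hn : 1 ≤ n) (Φ : Set (Fin n → ℝ)) (hsub : Φ ⊆ BCset n)
    (hcl : ∀ α ∈ Φ, ∀ β ∈ Φ, reflRoot α β ∈ Φ) :
    ∃ (ε : Fin n → ℝ) (blk : Fin n → Finset (Fin n)) (t : Finset (Fin n) → RType),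
      (∀ i, ε i = 1 ∨ ε i = -1) ∧
      (∀ i, i ∈ blk i) ∧ (∀ i j, j ∈ blk i → blk j = blk i) ∧
      (fun v : Fin n → ℝ => fun j => ε j * v j) '' Φ =
        ⋃ i, PhiOf (t (blk i)) (blk i) :=
  stmt9_general n Φ hsub hcl
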